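/- arXiv:2605.20586 — 2 statements merged into one kernel-verified Lean document; each statement's English description precedes it below -/
import Mathlib

section
/- Equivalence (1)⟺(2) of Corollary 3.3: Let (C, S) be a small limit sketch such that the inclusion Mod(C) ↪ (C ⥤ Type) admits a left adjoint L, and let A be a model. Then A is exponentiable in Mod(C) if and only if for every sketched cone γ : Δc ⇒ D in S (with D : J ⥤ C), the cocone in Mod(C) obtained by applying the functor Cᵒᵖ ⥤ Mod(C), c' ↦ L(C(c', −)) ⨯ A, to the opposite cocone γᵒᵖ : Dᵒᵖ ⇒ Δc in Cᵒᵖ is a colimit cocone; here C(c', −) denotes the corepresentable functor (the value of coyoneda at c') and ⨯ is the binary product of models, computed as in C ⥤ Type. -/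
/-!
STATEMENT 5 (Corollary 3.3, (1)⟺(2)): for a small limit sketch `(C, S)` whose category
of models is reflective in `C ⥤ Type` via a reflector `L`, a model `A` is exponentiable
in `Mod(C)` iff for every sketched cone `γ ∈ S` the image of the opposite cocone `γᵒᵖ`
under the functor `c' ↦ L(C(c', −)) ⨯ A` is a colimit cocone in `Mod(C)`.
-/

universe u

open CategoryTheory CategoryTheory.Limits MonoidalCategory

/-- A cone datum of a limit sketch: a small diagram together with a cone over it. -/
structure SketchCone (C : Type u) [Category.{u} C] : Type (u + 1) where
  J : Type u
  [instJ : SmallCategory J]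
  D : J ⥤ C
  cone : Cone D

attribute [instance] SketchCone.instJ

/-- A functor `F : C ⥤ Type` is a *model* of the sketch `(C, S)` if it sends every cone
in `S` to a limit cone. -/
def IsModel {C : Type u} [Category.{u} C] (S : Set (SketchCone C)) (F : C ⥤ Type u) :
    Prop :=
  ∀ K ∈ S, Nonempty (IsLimit (F.mapCone K.cone))

section ClosureUnderProducts

variable {C : Type u} [SmallCategory C] {J : Type u} [SmallCategory J]
  {D : J ⥤ C} {F G : C ⥤ Type u}

/-- The first-projection cone used to show that models are closed under binary
products. -/
@[simps]
def coneFst (s : Cone (D ⋙ (F ⊗ G))) : Cone (D ⋙ F) where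
  pt := s.pt
  π :=
    { app := fun j => TypeCat.ofHom fun x => (s.π.app j x).1
      naturality := fun j j' f => by
        ext x; exact congrArg Prod.fst (ConcreteCategory.congr_hom (s.π.naturality f) x) }

/-- The second-projection cone used to show that models are closed under binary
products. -/
@[simps]
def coneSnd (s : Cone (D ⋙ (F ⊗ G))) : Cone (D ⋙ G) where
  pt := s.pt
  π :=
    { app := fun j => TypeCat.ofHom fun x => (s.π.app j x).2
      naturality := fun j j' f => by
        ext x; exact congrArg Prod.snd (ConcreteCategory.congr_hom (s.π.naturality f) x) }

/-- Binary products (computed as in `C ⥤ Type`) of functors preserving the limit of a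
cone again preserve it. -/
def isLimitMapConeTensor {c : Cone D}
    (hF : IsLimit (F.mapCone c)) (hG : IsLimit (G.mapCone c)) :
    IsLimit ((F ⊗ G).mapCone c) where
  lift s := TypeCat.ofHom fun x => (hF.lift (coneFst s) x, hG.lift (coneSnd s) x)
  fac s j := by
    ext x
    refine Prod.ext ?_ ?_
    · have := ConcreteCategory.congr_hom (hF.fac (coneFst s) j) x
      simp at this ⊢
      exact this
    · have := ConcreteCategory.congr_hom (hG.fac (coneSnd s) j) x
      simp at this ⊢
      exact this
  uniq s m hm := by
    ext x
    refine Prod.ext ?_ ?_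
    · have := ConcreteCategory.congr_hom
        (hF.uniq (coneFst s) (TypeCat.ofHom fun y => (m y).1) fun j => by
          ext y; exact congrArg Prod.fst (ConcreteCategory.congr_hom (hm j) y)) x
      simp at this ⊢
      exact this
    · have := ConcreteCategory.congr_hom
        (hG.uniq (coneSnd s) (TypeCat.ofHom fun y => (m y).2) fun j => by
          ext y; exact congrArg Prod.snd (ConcreteCategory.congr_hom (hm j) y)) x
      simp at this ⊢
      exact this

/-- Binary products of models, computed as in `C ⥤ Type`, are again models. -/
theorem isModel_tensor {S : Set (SketchCone C)}
    (hF : IsModel S F) (hG : IsModel S G) : IsModel S (F ⊗ G) := fun K hK =>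
  ⟨isLimitMapConeTensor (hF K hK).some (hG K hK).some⟩

end ClosureUnderProducts

/-- The product functor `(−) ⨯ A` on `Mod(C)`, with binary products of models computed
as in `C ⥤ Type`. -/
noncomputable def modProd {C : Type u} [SmallCategory C] (S : Set (SketchCone C))
    (A : ObjectProperty.FullSubcategory (IsModel S)) :
    ObjectProperty.FullSubcategory (IsModel S) ⥤ ObjectProperty.FullSubcategory (IsModel S) :=
  ObjectProperty.lift _ (ObjectProperty.ι (IsModel S) ⋙ tensorRight A.obj)
    fun M => isModel_tensor M.property A.property

namespace Cor33Aux

open Opposite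

variable {C : Type u} [SmallCategory C] (S : Set (SketchCone C))
  (L : (C ⥤ Type u) ⥤ ObjectProperty.FullSubcategory (IsModel S))
  (adj : L ⊣ ObjectProperty.ι (IsModel S))

/-- The underlying natural transformation of a morphism of models. -/
abbrev homOf {N N' : ObjectProperty.FullSubcategory (IsModel S)} (f : N ⟶ N') : N.obj ⟶ N'.obj := f.hom

/-- The canonical element of the free model on the corepresentable functor at `c`. -/
noncomputable def etaEl (c : C) : (L.obj (coyoneda.obj (op c))).obj.obj c :=
  (adj.unit.app (coyoneda.obj (op c))).app c (𝟙 c)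

/-- Morphisms out of the free model on a corepresentable are elements. -/
noncomputable def mhe (c : C) (N : ObjectProperty.FullSubcategory (IsModel S)) :
    (L.obj (coyoneda.obj (op c)) ⟶ N) ≃ N.obj.obj c :=
  (adj.homEquiv (coyoneda.obj (op c)) N).trans coyonedaEquiv

theorem mhe_apply (c : C) (N : ObjectProperty.FullSubcategory (IsModel S))
    (t : L.obj (coyoneda.obj (op c)) ⟶ N) :
    mhe S L adj c N t = (homOf S t).app c (etaEl S L adj c) := by
  simp only [mhe, Equiv.trans_apply, Adjunction.homEquiv_unit, coyonedaEquiv_apply,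
    FunctorToTypes.comp]
  rfl

theorem etaEl_unit {c c' : C} (f : c ⟶ c') :
    (homOf S (L.map (coyoneda.map f.op))).app c' (etaEl S L adj c') =
      (adj.unit.app (coyoneda.obj (op c))).app c' f := by
  have h := ConcreteCategory.congr_hom (congr_app (adj.unit.naturality (coyoneda.map f.op)) c') (𝟙 c')
  simp only [FunctorToTypes.comp, Functor.id_map] at h
  have h2 : (coyoneda.map f.op).app c' (𝟙 c') = f := by simp
  rw [h2] at h
  exact h.symm.trans rfl

theorem etaEl_map {c c' : C} (f : c ⟶ c') :
    (L.obj (coyoneda.obj (op c))).obj.map f (etaEl S L adj c) =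
      (adj.unit.app (coyoneda.obj (op c))).app c' f := by
  have h := ConcreteCategory.congr_hom ((adj.unit.app (coyoneda.obj (op c))).naturality f) (𝟙 c)
  simp only [types_comp_apply, Functor.id_obj] at h
  have h2 : (coyoneda.obj (op c)).map f (𝟙 c) = f := by simp
  rw [h2] at h
  exact h.symm

theorem mhe_comp_left {c c' : C} (f : c ⟶ c') (N : ObjectProperty.FullSubcategory (IsModel S))
    (t : L.obj (coyoneda.obj (op c)) ⟶ N) :
    mhe S L adj c' N (L.map (coyoneda.map f.op) ≫ t) = N.obj.map f (mhe S L adj c N t) := by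
  rw [mhe_apply, mhe_apply]
  have h1 : (homOf S (L.map (coyoneda.map f.op) ≫ t)).app c' (etaEl S L adj c')
      = (homOf S t).app c' ((homOf S (L.map (coyoneda.map f.op))).app c' (etaEl S L adj c')) := rfl
  rw [h1, etaEl_unit, ← etaEl_map S L adj f]
  exact NatTrans.naturality_apply (homOf S t) f (etaEl S L adj c)

theorem mhe_comp_right (c : C) {N N' : ObjectProperty.FullSubcategory (IsModel S)}
    (t : L.obj (coyoneda.obj (op c)) ⟶ N) (h : N ⟶ N') :
    mhe S L adj c N' (t ≫ h) = (homOf S h).app c (mhe S L adj c N t) := by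
  rw [mhe_apply, mhe_apply]; rfl

theorem mhe_symm_map {c c' : C} (f : c ⟶ c') (N : ObjectProperty.FullSubcategory (IsModel S))
    (x : N.obj.obj c) :
    (mhe S L adj c' N).symm (N.obj.map f x) =
      L.map (coyoneda.map f.op) ≫ (mhe S L adj c N).symm x := by
  apply (mhe S L adj c' N).injective
  rw [Equiv.apply_symm_apply, mhe_comp_left, Equiv.apply_symm_apply]

theorem mhe_symm_comp (c : C) {N N' : ObjectProperty.FullSubcategory (IsModel S)}
    (x : N.obj.obj c) (h : N ⟶ N') :
    (mhe S L adj c N').symm ((homOf S h).app c x) = (mhe S L adj c N).symm x ≫ h := by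
  apply (mhe S L adj c N').injective
  rw [Equiv.apply_symm_apply, mhe_comp_right, Equiv.apply_symm_apply]


section LemmaA

variable (K : SketchCone C) (hK : K ∈ S)

/-- The compatible family of elements associated to a cocone under the free models
on a sketched cone. -/
noncomputable def freeSections (s : Cocone (K.D.op ⋙ coyoneda ⋙ L)) :
    (K.D ⋙ s.pt.obj).sections :=
  ⟨fun j => mhe S L adj (K.D.obj j) s.pt (s.ι.app (op j)), by
    intro j j' f
    dsimp only
    rw [← s.w f.op]
    exact (mhe_comp_left S L adj (K.D.map f) s.pt (s.ι.app (op j))).symm⟩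

/-- The descent morphism out of the free model on the apex. -/
noncomputable def freeDesc (s : Cocone (K.D.op ⋙ coyoneda ⋙ L)) :
    L.obj (coyoneda.obj (op K.cone.pt)) ⟶ s.pt :=
  (mhe S L adj K.cone.pt s.pt).symm
    ((Types.isLimitEquivSections (s.pt.property K hK).some).symm (freeSections S L adj K s))

theorem freeDesc_fac (s : Cocone (K.D.op ⋙ coyoneda ⋙ L)) (j : K.J) :
    L.map (coyoneda.map (K.cone.π.app j).op) ≫ freeDesc S L adj K hK s = s.ι.app (op j) := by
  apply (mhe S L adj (K.D.obj j) s.pt).injective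
  rw [mhe_comp_left S L adj (c := K.cone.pt) (K.cone.π.app j) s.pt (freeDesc S L adj K hK s),
    freeDesc, Equiv.apply_symm_apply]
  exact Types.isLimitEquivSections_symm_apply (s.pt.property K hK).some
    (freeSections S L adj K s) j

/-- The cocone of free models on a sketched cone is a colimit in the category of models. -/
noncomputable def isColimitFree : IsColimit ((coyoneda ⋙ L).mapCocone K.cone.op) where
  desc s := freeDesc S L adj K hK s
  fac s j := freeDesc_fac S L adj K hK s j.unop
  uniq s m hm := by
    apply (mhe S L adj K.cone.pt s.pt).injective
    apply (Types.isLimitEquivSections (s.pt.property K hK).some).injective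
    apply Subtype.ext
    funext j
    have key : ∀ (t : L.obj (coyoneda.obj (op K.cone.pt)) ⟶ s.pt),
        ((Types.isLimitEquivSections (s.pt.property K hK).some)
            (mhe S L adj K.cone.pt s.pt t) : ∀ j, (K.D ⋙ s.pt.obj).obj j) j
          = mhe S L adj (K.D.obj j) s.pt (L.map (coyoneda.map (K.cone.π.app j).op) ≫ t) := by
      intro t
      rw [mhe_comp_left]
      rfl
    rw [key m, key (freeDesc S L adj K hK s)]
    have hm' : L.map (coyoneda.map (K.cone.π.app j).op) ≫ m = s.ι.app (op j) := hm (op j)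
    rw [hm', freeDesc_fac S L adj K hK s j]

end LemmaA


section Reverse

variable (A : ObjectProperty.FullSubcategory (IsModel S))

/-- `modProd` computes pointwise as a product with the identity on the second factor. -/
theorem modProd_map_app {M M' : ObjectProperty.FullSubcategory (IsModel S)} (t : M ⟶ M') (c : C)
    (p : ((modProd S A).obj M).obj.obj c) :
    (homOf S ((modProd S A).map t)).app c p = ((homOf S t).app c p.1, p.2) := rfl

/-- The presheaf `c ↦ Hom(L(C(c,−)) ⨯ A, F)`. -/
noncomputable def HF (F : ObjectProperty.FullSubcategory (IsModel S)) : C ⥤ Type u where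
  obj c := (coyoneda ⋙ L ⋙ modProd S A).obj (op c) ⟶ F
  map f := TypeCat.ofHom fun φ => (coyoneda ⋙ L ⋙ modProd S A).map f.op ≫ φ
  map_id c := ConcreteCategory.hom_ext _ _ fun φ => by simp
  map_comp f g := ConcreteCategory.hom_ext _ _ fun φ => by simp

/-- The evaluation map `HF F ⊗ A ⟶ F` at the level of presheaves. -/
noncomputable def ev0 (F : ObjectProperty.FullSubcategory (IsModel S)) :
    HF S L A F ⊗ A.obj ⟶ F.obj where
  app c := TypeCat.ofHom fun p => (homOf S p.1).app c (etaEl S L adj c, p.2)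
  naturality c c' g := by
    apply ConcreteCategory.hom_ext; intro p
    have hnat := NatTrans.naturality_apply (homOf S p.1) g
      ((etaEl S L adj c, p.2) : (L.obj (coyoneda.obj (op c))).obj.obj c × A.obj.obj c)
    have h1 : ((HF S L A F ⊗ A.obj).map g ≫ TypeCat.ofHom fun p : (HF S L A F ⊗ A.obj).obj c' =>
          (homOf S p.1).app c' (etaEl S L adj c', p.2)) p
        = (homOf S p.1).app c'
            ((homOf S (L.map (coyoneda.map g.op))).app c' (etaEl S L adj c'),
              A.obj.map g p.2) := rfl
    refine h1.trans ?_
    rw [etaEl_unit, ← etaEl_map S L adj g]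
    exact hnat

/-- Condition (2) implies that each `HF F` is a model. -/
theorem isModel_HF
    (h2 : ∀ K ∈ S, Nonempty (IsColimit
      ((coyoneda ⋙ L ⋙ modProd S A).mapCocone K.cone.op)))
    (F : ObjectProperty.FullSubcategory (IsModel S)) : IsModel S (HF S L A F) := by
  intro K hK
  obtain ⟨ht⟩ := h2 K hK
  constructor
  exact
    { lift := fun s => TypeCat.ofHom fun x => ht.desc
        ⟨F, { app := fun j => s.π.app j.unop x
              naturality := fun {jj jj'} g => by
                simp only [Functor.const_obj_map, Category.comp_id]
                exact ConcreteCategory.congr_hom (s.w g.unop) x }⟩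
      fac := fun s j => ConcreteCategory.hom_ext _ _ fun x => ht.fac _ (op j)
      uniq := fun s m hm => ConcreteCategory.hom_ext _ _ fun x => by
        refine ht.hom_ext fun jj => ?_
        erw [ht.fac]
        exact ConcreteCategory.congr_hom (hm jj.unop) x }

section WithH2

variable (h2 : ∀ K ∈ S, Nonempty (IsColimit
  ((coyoneda ⋙ L ⋙ modProd S A).mapCocone K.cone.op)))

/-- `HF F` as a model. -/
noncomputable abbrev RObj (F : ObjectProperty.FullSubcategory (IsModel S)) : ObjectProperty.FullSubcategory (IsModel S) :=
  ⟨HF S L A F, isModel_HF S L A h2 F⟩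

/-- Evaluation as a morphism of models. -/
noncomputable def evM (F : ObjectProperty.FullSubcategory (IsModel S)) :
    (modProd S A).obj (RObj S L A h2 F) ⟶ F :=
  ObjectProperty.homMk (ev0 S L adj A F)

/-- The transpose of a morphism `M ⨯ A ⟶ F`. -/
noncomputable def fwd {M F : ObjectProperty.FullSubcategory (IsModel S)}
    (ψ : (modProd S A).obj M ⟶ F) : M ⟶ RObj S L A h2 F := ObjectProperty.homMk
 { app := fun c => TypeCat.ofHom fun x => (modProd S A).map ((mhe S L adj c M).symm x) ≫ ψ
   naturality := fun c c' f => by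
    apply ConcreteCategory.hom_ext; intro x
    show (modProd S A).map ((mhe S L adj c' M).symm (M.obj.map f x)) ≫ ψ
      = (coyoneda ⋙ L ⋙ modProd S A).map f.op ≫
          (modProd S A).map ((mhe S L adj c M).symm x) ≫ ψ
    rw [mhe_symm_map, Functor.map_comp, Category.assoc]
    rfl }

theorem map_fwd_ev {M F : ObjectProperty.FullSubcategory (IsModel S)}
    (ψ : (modProd S A).obj M ⟶ F) :
    (modProd S A).map (fwd S L adj A h2 ψ) ≫ evM S L adj A h2 F = ψ := by
  apply ObjectProperty.hom_ext; apply NatTrans.ext; funext c; apply ConcreteCategory.hom_ext; intro p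
  show (homOf S ψ).app c ((homOf S ((mhe S L adj c M).symm p.1)).app c (etaEl S L adj c), p.2)
    = (homOf S ψ).app c p
  rw [← mhe_apply, Equiv.apply_symm_apply]
  rfl

theorem fwd_comp_left {M' M F : ObjectProperty.FullSubcategory (IsModel S)} (h : M' ⟶ M)
    (ψ : (modProd S A).obj M ⟶ F) :
    fwd S L adj A h2 ((modProd S A).map h ≫ ψ) = h ≫ fwd S L adj A h2 ψ := by
  apply ObjectProperty.hom_ext; apply NatTrans.ext; funext c; apply ConcreteCategory.hom_ext; intro x
  show (modProd S A).map ((mhe S L adj c M').symm x) ≫ (modProd S A).map h ≫ ψ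
    = (modProd S A).map ((mhe S L adj c M).symm ((homOf S h).app c x)) ≫ ψ
  rw [mhe_symm_comp, Functor.map_comp, Category.assoc]

/-- The canonical idempotent on `HF F`. -/
noncomputable def gammaM (F : ObjectProperty.FullSubcategory (IsModel S)) :
    RObj S L A h2 F ⟶ RObj S L A h2 F :=
  fwd S L adj A h2 (evM S L adj A h2 F)

theorem fwd_fixed {M F : ObjectProperty.FullSubcategory (IsModel S)}
    (ψ : (modProd S A).obj M ⟶ F) :
    fwd S L adj A h2 ψ ≫ gammaM S L adj A h2 F = fwd S L adj A h2 ψ := by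
  have h := fwd_comp_left S L adj A h2 (fwd S L adj A h2 ψ) (evM S L adj A h2 F)
  rw [map_fwd_ev] at h
  exact h.symm

theorem fwd_comp_right {M F F' : ObjectProperty.FullSubcategory (IsModel S)}
    (ψ : (modProd S A).obj M ⟶ F) (g : F ⟶ F') (c : C) (x : M.obj.obj c) :
    (homOf S (fwd S L adj A h2 (ψ ≫ g))).app c x
      = (homOf S (fwd S L adj A h2 ψ)).app c x ≫ g := rfl

/-- Postcomposition `HF F ⟶ HF F'`. -/
noncomputable def pc {F F' : ObjectProperty.FullSubcategory (IsModel S)} (g : F ⟶ F') :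
    RObj S L A h2 F ⟶ RObj S L A h2 F' := ObjectProperty.homMk
 { app := fun c => TypeCat.ofHom fun φ => φ ≫ g
   naturality := fun c c' f => by
    apply ConcreteCategory.hom_ext; intro φ
    show ((coyoneda ⋙ L ⋙ modProd S A).map f.op ≫ φ) ≫ g
      = (coyoneda ⋙ L ⋙ modProd S A).map f.op ≫ φ ≫ g
    exact Category.assoc _ _ _ }

theorem map_pc_ev {F F' : ObjectProperty.FullSubcategory (IsModel S)} (g : F ⟶ F') :
    (modProd S A).map (pc S L A h2 g) ≫ evM S L adj A h2 F'
      = evM S L adj A h2 F ≫ g := rfl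

theorem gamma_pc {F F' : ObjectProperty.FullSubcategory (IsModel S)} (g : F ⟶ F') :
    gammaM S L adj A h2 F ≫ pc S L A h2 g
      = pc S L A h2 g ≫ gammaM S L adj A h2 F' := by
  have h1 : gammaM S L adj A h2 F ≫ pc S L A h2 g
      = fwd S L adj A h2 (evM S L adj A h2 F ≫ g) := by
    apply ObjectProperty.hom_ext; apply NatTrans.ext; funext c; apply ConcreteCategory.hom_ext; intro x
    exact (fwd_comp_right S L adj A h2 (evM S L adj A h2 F) g c x).symm
  have h2' : pc S L A h2 g ≫ gammaM S L adj A h2 F'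
      = fwd S L adj A h2 (evM S L adj A h2 F ≫ g) := by
    rw [gammaM, ← fwd_comp_left S L adj A h2 (pc S L A h2 g) (evM S L adj A h2 F'),
      map_pc_ev]
  rw [h1, h2']

/-- The subpresheaf of `HF F` of fixed points of the canonical idempotent. -/
noncomputable def FixF (F : ObjectProperty.FullSubcategory (IsModel S)) : C ⥤ Type u where
  obj c := { φ : (HF S L A F).obj c //
    (homOf S (gammaM S L adj A h2 F)).app c φ = φ }
  map {c c'} f := TypeCat.ofHom fun φ => ⟨(HF S L A F).map f φ.1, by
    have h := NatTrans.naturality_apply (F := HF S L A F) (G := HF S L A F)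
      (homOf S (gammaM S L adj A h2 F)) f φ.1
    exact h.trans (congrArg (fun y => (HF S L A F).map f y) φ.2)⟩
  map_id c := by
    apply ConcreteCategory.hom_ext; intro φ
    apply Subtype.ext
    exact ConcreteCategory.congr_hom ((HF S L A F).map_id c) φ.1
  map_comp {c c' c''} f g := by
    apply ConcreteCategory.hom_ext; intro φ
    apply Subtype.ext
    exact ConcreteCategory.congr_hom ((HF S L A F).map_comp f g) φ.1

/-- The compatible family underlying a cone over `FixF`. -/
noncomputable def fixSec (F : ObjectProperty.FullSubcategory (IsModel S)) (K : SketchCone C)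
    (s : Cone (K.D ⋙ FixF S L adj A h2 F)) (x : s.pt) :
    (K.D ⋙ HF S L A F).sections :=
  ⟨fun j => (s.π.app j x).1, fun {j j'} f => by
    have := ConcreteCategory.congr_hom (s.w f) x; exact congrArg Subtype.val this⟩

theorem fixSec_apply (F : ObjectProperty.FullSubcategory (IsModel S)) (K : SketchCone C)
    (hHF : IsLimit ((HF S L A F).mapCone K.cone))
    (s : Cone (K.D ⋙ FixF S L adj A h2 F)) (x : s.pt) (j : K.J) :
    (HF S L A F).map (K.cone.π.app j)
      ((Types.isLimitEquivSections hHF).symm (fixSec S L adj A h2 F K s x))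
      = (s.π.app j x).1 :=
  Types.isLimitEquivSections_symm_apply hHF _ j

theorem isModel_FixF (F : ObjectProperty.FullSubcategory (IsModel S)) :
    IsModel S (FixF S L adj A h2 F) := by
  intro K hK
  obtain ⟨hHF⟩ := isModel_HF S L A h2 F K hK
  constructor
  refine { lift := fun s => TypeCat.ofHom fun x =>
      ⟨(Types.isLimitEquivSections hHF).symm (fixSec S L adj A h2 F K s x), ?_⟩,
           fac := ?_, uniq := ?_ }
  · -- fixedness of the lifted element
    apply (Types.isLimitEquivSections hHF).injective
    apply Subtype.ext
    funext j
    have hnat := NatTrans.naturality_apply (F := HF S L A F) (G := HF S L A F)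
      (homOf S (gammaM S L adj A h2 F))
      (K.cone.π.app j : K.cone.pt ⟶ K.D.obj j)
      ((Types.isLimitEquivSections hHF).symm (fixSec S L adj A h2 F K s x))
    calc ((Types.isLimitEquivSections hHF)
            ((homOf S (gammaM S L adj A h2 F)).app K.cone.pt
              ((Types.isLimitEquivSections hHF).symm (fixSec S L adj A h2 F K s x)))).val j
        = (homOf S (gammaM S L adj A h2 F)).app (K.D.obj j)
            ((HF S L A F).map (K.cone.π.app j)
              ((Types.isLimitEquivSections hHF).symm (fixSec S L adj A h2 F K s x))) :=
          hnat.symm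
      _ = (homOf S (gammaM S L adj A h2 F)).app (K.D.obj j) ((s.π.app j x).1) := by
            rw [fixSec_apply S L adj A h2 F K hHF s x j]
      _ = (s.π.app j x).1 := (s.π.app j x).2
      _ = ((Types.isLimitEquivSections hHF)
            ((Types.isLimitEquivSections hHF).symm (fixSec S L adj A h2 F K s x))).val j :=
          (congrArg (fun (t : (K.D ⋙ HF S L A F).sections) => t.val j)
            (Equiv.apply_symm_apply (Types.isLimitEquivSections hHF)
              (fixSec S L adj A h2 F K s x))).symm
  · intro s j
    apply ConcreteCategory.hom_ext; intro x
    apply Subtype.ext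
    exact fixSec_apply S L adj A h2 F K hHF s x j
  · intro s m hm
    apply ConcreteCategory.hom_ext; intro x
    apply Subtype.ext
    apply (Types.isLimitEquivSections hHF).injective
    apply Subtype.ext
    funext j
    calc ((Types.isLimitEquivSections hHF) (m x).1).val j
        = (HF S L A F).map (K.cone.π.app j) (m x).1 := rfl
      _ = (s.π.app j x).1 := by
          have := ConcreteCategory.congr_hom (hm j) x; exact congrArg Subtype.val this
      _ = ((Types.isLimitEquivSections hHF)
            ((Types.isLimitEquivSections hHF).symm (fixSec S L adj A h2 F K s x))).val j :=
          (congrArg (fun (t : (K.D ⋙ HF S L A F).sections) => t.val j)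
            (Equiv.apply_symm_apply (Types.isLimitEquivSections hHF)
              (fixSec S L adj A h2 F K s x))).symm

/-- The candidate right adjoint `F ↦ Fix F`. -/
noncomputable def Rexp : ObjectProperty.FullSubcategory (IsModel S) ⥤ ObjectProperty.FullSubcategory (IsModel S) where
  obj F := ⟨FixF S L adj A h2 F, isModel_FixF S L adj A h2 F⟩
  map {F F'} g := ObjectProperty.homMk
    { app := fun c => TypeCat.ofHom fun φ => ⟨φ.1 ≫ g, by
        have h := ConcreteCategory.congr_hom
          (congr_app (congrArg (fun t => homOf S t) (gamma_pc S L adj A h2 g)) c) φ.1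
        have h' : (homOf S (gammaM S L adj A h2 F')).app c (φ.1 ≫ g)
            = (homOf S (gammaM S L adj A h2 F)).app c φ.1 ≫ g := h.symm
        rw [h', φ.2]⟩
      naturality := fun c c' f => by
        apply ConcreteCategory.hom_ext; intro φ
        apply Subtype.ext
        show ((coyoneda ⋙ L ⋙ modProd S A).map f.op ≫ φ.1) ≫ g
          = (coyoneda ⋙ L ⋙ modProd S A).map f.op ≫ φ.1 ≫ g
        exact Category.assoc _ _ _ }
  map_id F := by
    apply ObjectProperty.hom_ext; apply NatTrans.ext; funext c; apply ConcreteCategory.hom_ext; intro φ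
    apply Subtype.ext
    exact Category.comp_id φ.1
  map_comp {F F' F''} g g' := by
    apply ObjectProperty.hom_ext; apply NatTrans.ext; funext c; apply ConcreteCategory.hom_ext; intro φ
    apply Subtype.ext
    exact (Category.assoc φ.1 g g').symm

/-- Inclusion of the fixed points into `HF F`. -/
noncomputable def inclFix (F : ObjectProperty.FullSubcategory (IsModel S)) :
    (Rexp S L adj A h2).obj F ⟶ RObj S L A h2 F := ObjectProperty.homMk
  { app := fun c => TypeCat.ofHom fun φ => φ.1
    naturality := fun c c' f => rfl }

/-- Transposition. -/
noncomputable def toFix {M F : ObjectProperty.FullSubcategory (IsModel S)}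
    (ψ : (modProd S A).obj M ⟶ F) : M ⟶ (Rexp S L adj A h2).obj F := ObjectProperty.homMk
 { app := fun c => TypeCat.ofHom fun x => ⟨(homOf S (fwd S L adj A h2 ψ)).app c x,
    by
      have h := ConcreteCategory.congr_hom
        (congr_app (congrArg (fun t => homOf S t) (fwd_fixed S L adj A h2 ψ)) c) x
      simp only [homOf, ObjectProperty.FullSubcategory.comp_hom, NatTrans.comp_app,
        types_comp_apply] at h
      exact h⟩
   naturality := fun c c' f => by
    apply ConcreteCategory.hom_ext; intro x
    apply Subtype.ext
    show (homOf S (fwd S L adj A h2 ψ)).app c' (M.obj.map f x)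
      = (HF S L A F).map f ((homOf S (fwd S L adj A h2 ψ)).app c x)
    have h := NatTrans.naturality_apply (homOf S (fwd S L adj A h2 ψ)) f x
    rw [h] }

/-- Inverse transposition. -/
noncomputable def ofFix {M F : ObjectProperty.FullSubcategory (IsModel S)}
    (θ : M ⟶ (Rexp S L adj A h2).obj F) : (modProd S A).obj M ⟶ F :=
  (modProd S A).map (θ ≫ inclFix S L adj A h2 F) ≫ evM S L adj A h2 F

theorem toFix_incl {M F : ObjectProperty.FullSubcategory (IsModel S)}
    (ψ : (modProd S A).obj M ⟶ F) :
    toFix S L adj A h2 ψ ≫ inclFix S L adj A h2 F = fwd S L adj A h2 ψ := rfl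

theorem ofFix_toFix {M F : ObjectProperty.FullSubcategory (IsModel S)}
    (ψ : (modProd S A).obj M ⟶ F) : ofFix S L adj A h2 (toFix S L adj A h2 ψ) = ψ := by
  show (modProd S A).map (toFix S L adj A h2 ψ ≫ inclFix S L adj A h2 F)
      ≫ evM S L adj A h2 F = ψ
  rw [toFix_incl]
  exact map_fwd_ev S L adj A h2 ψ

theorem toFix_ofFix {M F : ObjectProperty.FullSubcategory (IsModel S)}
    (θ : M ⟶ (Rexp S L adj A h2).obj F) : toFix S L adj A h2 (ofFix S L adj A h2 θ) = θ := by
  apply ObjectProperty.hom_ext; apply NatTrans.ext; funext c; apply ConcreteCategory.hom_ext; intro x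
  apply Subtype.ext
  have h := ConcreteCategory.congr_hom (congr_app (congrArg (fun t => homOf S t)
    (fwd_comp_left S L adj A h2 (θ ≫ inclFix S L adj A h2 F) (evM S L adj A h2 F))) c) x
  exact h.trans (((homOf S θ).app c x).2)

/-- The adjunction `(− ⨯ A) ⊣ Rexp`. -/
noncomputable def adjExp : modProd S A ⊣ Rexp S L adj A h2 :=
  Adjunction.mkOfHomEquiv
    { homEquiv := fun M F =>
        { toFun := toFix S L adj A h2
          invFun := ofFix S L adj A h2
          left_inv := ofFix_toFix S L adj A h2
          right_inv := toFix_ofFix S L adj A h2 }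
      homEquiv_naturality_left_symm := fun {M' M F} f θ => by
        show (modProd S A).map ((f ≫ θ) ≫ inclFix S L adj A h2 F) ≫ evM S L adj A h2 F
          = (modProd S A).map f ≫ (modProd S A).map (θ ≫ inclFix S L adj A h2 F)
              ≫ evM S L adj A h2 F
        rw [Category.assoc, Functor.map_comp, Category.assoc]
      homEquiv_naturality_right := fun {M F F'} ψ g => by
        apply ObjectProperty.hom_ext; apply NatTrans.ext; funext c; apply ConcreteCategory.hom_ext; intro x
        apply Subtype.ext
        show (homOf S (fwd S L adj A h2 (ψ ≫ g))).app c x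
          = (homOf S (fwd S L adj A h2 ψ)).app c x ≫ g
        exact fwd_comp_right S L adj A h2 ψ g c x }

end WithH2

end Reverse

end Cor33Aux

/-- Corollary 3.3, (1)⟺(2). -/
theorem exponentiable_model_iff_preserves_sketched_colimits
    {C : Type u} [SmallCategory C] (S : Set (SketchCone C))
    (L : (C ⥤ Type u) ⥤ ObjectProperty.FullSubcategory (IsModel S))
    (adj : L ⊣ ObjectProperty.ι (IsModel S))
    (A : ObjectProperty.FullSubcategory (IsModel S)) :
    (modProd S A).IsLeftAdjoint ↔
      ∀ K ∈ S, Nonempty (IsColimit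
        ((coyoneda ⋙ L ⋙ modProd S A).mapCocone K.cone.op)) := by
  constructor
  · intro h1 K hK
    have hp : PreservesColimitsOfSize.{u, u} (modProd S A) :=
      (Adjunction.ofIsLeftAdjoint (modProd S A)).leftAdjoint_preservesColimits
    exact ⟨isColimitOfPreserves (modProd S A) (Cor33Aux.isColimitFree S L adj K hK)⟩
  · intro h2
    exact ⟨(Cor33Aux.Rexp S L adj A h2), ⟨Cor33Aux.adjExp S L adj A h2⟩⟩
end

section
/- Relative reduction to binary factorizations (from Proposition 3.9): Let π : E → B be a semifunctor such that binary factorizations lift uniquely along π, i.e. for every morphism f of E and every factorization π f = g₁ ≫ g₂ in B there is exactly one factorization f = f₁ ≫ f₂ in E with π f₁ = g₁ and π f₂ = g₂. Then ternary factorizations also lift uniquely along π: for every morphism f of E and every factorization π f = g₁ ≫ g₂ ≫ g₃ in B there is exactly one factorization f = f₁ ≫ f₂ ≫ f₃ in E with π fᵢ = gᵢ for i = 1, 2, 3. -/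
/-!
STATEMENT 10 (from Proposition 3.9): if binary factorizations lift uniquely along a
semifunctor `π : E → B`, then ternary factorizations also lift uniquely along `π`.
-/

universe v u

/-- A *semicategory*: like a category, but without identity morphisms. -/
class Semicategory (obj : Type u) : Type max u (v + 1) extends Quiver.{v} obj where
  /-- composition of morphisms -/
  comp : ∀ {X Y Z : obj}, (X ⟶ Y) → (Y ⟶ Z) → (X ⟶ Z)
  /-- composition is associative -/
  assoc : ∀ {W X Y Z : obj} (f : W ⟶ X) (g : X ⟶ Y) (h : Y ⟶ Z),
    comp (comp f g) h = comp f (comp g h)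

/-- A *semifunctor* between semicategories. -/
structure Semifunctor (C : Type u) (D : Type u)
    [Semicategory.{v} C] [Semicategory.{v} D] where
  obj : C → D
  map : ∀ {X Y : C}, (X ⟶ Y) → (obj X ⟶ obj Y)
  map_comp : ∀ {X Y Z : C} (f : X ⟶ Y) (g : Y ⟶ Z),
    map (Semicategory.comp f g) = Semicategory.comp (map f) (map g)

lemma comp_heq {B : Type u} [Semicategory.{v} B] {a a' b b' c : B}
    (ha : a = a') (hb : b = b') (u : a ⟶ b) (u' : a' ⟶ b') (v : b ⟶ c) (v' : b' ⟶ c)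
    (hu : HEq u u') (hv : HEq v v') :
    HEq (Semicategory.comp u v) (Semicategory.comp u' v') := by
  subst ha hb
  rw [heq_iff_eq] at hu hv ⊢
  rw [hu, hv]

theorem unique_ternary_lifts_of_unique_binary_lifts
    {E B : Type u} [Semicategory.{v} E] [Semicategory.{v} B] (π : Semifunctor E B)
    (h : ∀ {x y : E} (f : x ⟶ y) {z : B} (g₁ : π.obj x ⟶ z) (g₂ : z ⟶ π.obj y),
      π.map f = Semicategory.comp g₁ g₂ →
      ∃! p : Σ m : E, (x ⟶ m) × (m ⟶ y),
        Semicategory.comp p.2.1 p.2.2 = f ∧ π.obj p.1 = z ∧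
          HEq (π.map p.2.1) g₁ ∧ HEq (π.map p.2.2) g₂)
    {x y : E} (f : x ⟶ y) {z₁ z₂ : B}
    (g₁ : π.obj x ⟶ z₁) (g₂ : z₁ ⟶ z₂) (g₃ : z₂ ⟶ π.obj y)
    (hf : π.map f = Semicategory.comp g₁ (Semicategory.comp g₂ g₃)) :
    ∃! q : Σ (m₁ : E) (m₂ : E), (x ⟶ m₁) × (m₁ ⟶ m₂) × (m₂ ⟶ y),
      Semicategory.comp q.2.2.1 (Semicategory.comp q.2.2.2.1 q.2.2.2.2) = f ∧
        π.obj q.1 = z₁ ∧ π.obj q.2.1 = z₂ ∧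
        HEq (π.map q.2.2.1) g₁ ∧ HEq (π.map q.2.2.2.1) g₂ ∧ HEq (π.map q.2.2.2.2) g₃ := by
  obtain ⟨⟨m₁, f₁, f₂₃⟩, ⟨hc, hm, h1, h23⟩, huniq⟩ :=
    h f g₁ (Semicategory.comp g₂ g₃) hf
  dsimp only at hc hm h1 h23 huniq
  subst hm
  rw [heq_iff_eq] at h1 h23
  obtain ⟨⟨m₂, f₂, f₃⟩, ⟨hc', hm', h2, h3⟩, huniq'⟩ := h f₂₃ g₂ g₃ h23
  dsimp only at hc' hm' h2 h3 huniq'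
  subst hm'
  rw [heq_iff_eq] at h2 h3
  refine ⟨⟨m₁, m₂, f₁, f₂, f₃⟩, ⟨?_, rfl, rfl, heq_of_eq h1, heq_of_eq h2, heq_of_eq h3⟩, ?_⟩
  · rw [hc', hc]
  · rintro ⟨n₁, n₂, e₁, e₂, e₃⟩ ⟨ceq, hq1, hq2, hq3, hq4, hq5⟩
    dsimp only at ceq hq1 hq2 hq3 hq4 hq5
    have key : (⟨n₁, e₁, Semicategory.comp e₂ e₃⟩ : Σ m : E, (x ⟶ m) × (m ⟶ y))
        = ⟨m₁, f₁, f₂₃⟩ := by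
      refine huniq _ ⟨ceq, hq1, hq3, ?_⟩
      rw [π.map_comp]
      exact comp_heq hq1 hq2 _ _ _ _ hq4 hq5
    injection key with h' key
    subst h'
    rw [heq_iff_eq, Prod.mk.injEq] at key
    obtain ⟨rfl, key⟩ := key
    have key2 := huniq' ⟨n₂, e₂, e₃⟩ ⟨key, hq2, hq4, hq5⟩
    injection key2 with h'' key2
    subst h''
    rw [heq_iff_eq, Prod.mk.injEq] at key2
    obtain ⟨rfl, rfl⟩ := key2
    rfl
end
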